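/- First-return time to a fundamental annular domain along hyperbolae: consider f = φ¹_{J∇Q} with Q(x,y) = q(xy), q'(s) ≈ λ > 0 for small s, acting on a neighborhood V of 0 in the first quadrant. Fix a fundamental domain 𝓕 ⊂ V bounded by two transversals L and f(L) to the hyperbolae {xy = c}. Then for every point (x,y) ∈ V in the quadrant with 0 < xy small, the set of iterates j ≥ 0 with fʲ(x,y) ∈ 𝓕 along the arc of hyperbola {x'y' = xy} is nonempty, and the first such return time n(x,y) satisfies c₁ |ln(xy)|/λ ≤ n(x,y) ≤ c₂ |ln(xy)|/λ for constants c₁, c₂ > 0 depending only on 𝓕 and λ. -/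
import Mathlib


set_option maxHeartbeats 1000000 in
/-- First-return time to a fundamental annular domain along hyperbolae: for
`f(x,y) = (e^{−q'(xy)} x, e^{q'(xy)} y)` with `q'` pinched between `λ/2` and `2λ`
near `0`, and the fundamental domain `𝓕` between the transversal `{y = y₀}` and
its image (i.e. `y₀ ≤ y < e^{q'(xy)} y₀`), every point `(x,y)` with `x` in a fixed
interval `[a₁,b₁] ⊂ ℝ₊*`, `y > 0` and `0 < xy` sufficiently small has some
iterate in `𝓕`, and the first return time `n(x,y)` satisfies
`c₁ |ln(xy)|/λ ≤ n(x,y) ≤ c₂ |ln(xy)|/λ` with constants depending only on the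
data. -/
theorem first_return_time_estimate (lam : ℝ) (hlam : 0 < lam)
    (q : ℝ → ℝ) (δ : ℝ) (hδ : 0 < δ)
    (hq : ∀ s : ℝ, |s| ≤ δ → lam / 2 ≤ deriv q s ∧ deriv q s ≤ 2 * lam)
    (a₁ b₁ y₀ : ℝ) (ha₁ : 0 < a₁) (hab : a₁ ≤ b₁) (hy₀ : 0 < y₀)
    (f : ℝ × ℝ → ℝ × ℝ)
    (hf : ∀ p : ℝ × ℝ,
      f p = (Real.exp (-deriv q (p.1 * p.2)) * p.1,
             Real.exp (deriv q (p.1 * p.2)) * p.2)) :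
    ∃ c₁ : ℝ, 0 < c₁ ∧ ∃ c₂ : ℝ, 0 < c₂ ∧ ∃ ε : ℝ, 0 < ε ∧
      ∀ x y : ℝ, x ∈ Set.Icc a₁ b₁ → 0 < y → x * y < ε →
        {j : ℕ | y₀ ≤ (f^[j] (x, y)).2 ∧
          (f^[j] (x, y)).2 <
            Real.exp (deriv q ((f^[j] (x, y)).1 * (f^[j] (x, y)).2)) * y₀}.Nonempty ∧
        c₁ * |Real.log (x * y)| / lam ≤
          (sInf {j : ℕ | y₀ ≤ (f^[j] (x, y)).2 ∧
            (f^[j] (x, y)).2 <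
              Real.exp (deriv q ((f^[j] (x, y)).1 * (f^[j] (x, y)).2)) * y₀} : ℕ) ∧
        ((sInf {j : ℕ | y₀ ≤ (f^[j] (x, y)).2 ∧
            (f^[j] (x, y)).2 <
              Real.exp (deriv q ((f^[j] (x, y)).1 * (f^[j] (x, y)).2)) * y₀} : ℕ) : ℝ)
          ≤ c₂ * |Real.log (x * y)| / lam := by
  set M : ℝ := max (max lam 1) (max (2 * |Real.log (y₀ * a₁)|) (|Real.log (y₀ * b₁)|))
    with hM
  have hM1 : (1:ℝ) ≤ M := le_trans (le_max_right lam 1) (le_max_left _ _)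
  have hMlam : lam ≤ M := le_trans (le_max_left lam 1) (le_max_left _ _)
  have hMa : 2 * |Real.log (y₀ * a₁)| ≤ M := le_trans (le_max_left _ _) (le_max_right _ _)
  have hMb : |Real.log (y₀ * b₁)| ≤ M := le_trans (le_max_right _ _) (le_max_right _ _)
  refine ⟨1/4, by norm_num, 5, by norm_num,
    min δ (min (a₁ * y₀) (Real.exp (-M))), by positivity, ?_⟩
  intro x y hx hy hcε
  obtain ⟨hx1, hx2⟩ := hx
  have hx0 : 0 < x := lt_of_lt_of_le ha₁ hx1
  have hc0 : 0 < x * y := mul_pos hx0 hy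
  have hcδ : x * y ≤ δ := le_of_lt (lt_of_lt_of_le hcε (min_le_left _ _))
  have hcy : x * y < a₁ * y₀ :=
    lt_of_lt_of_le hcε (le_trans (min_le_right _ _) (min_le_left _ _))
  have hcM : x * y < Real.exp (-M) :=
    lt_of_lt_of_le hcε (le_trans (min_le_right _ _) (min_le_right _ _))
  set t := deriv q (x * y) with htdef
  obtain ⟨ht1, ht2⟩ := hq (x * y) (by rw [abs_of_pos hc0]; exact hcδ)
  have ht0 : 0 < t := lt_of_lt_of_le (by positivity) ht1
  set L := -Real.log (x * y) with hL
  have hLM : M < L := by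
    have h := Real.log_lt_log hc0 hcM
    rw [Real.log_exp] at h
    simp only [hL]
    linarith
  have hL0 : 0 < L := by linarith
  have hlogneg : Real.log (x * y) < 0 := by
    have : L > 0 := hL0
    rw [hL] at this; linarith
  have habs : |Real.log (x * y)| = L := by rw [abs_of_neg hlogneg]
  have hyy₀ : y < y₀ := by nlinarith
  -- formula for the iterates
  have hkey : ∀ j : ℕ, Real.exp (-(↑j * t)) * x * (Real.exp (↑j * t) * y) = x * y := by
    intro j
    have h1 : Real.exp (-(↑j * t)) * Real.exp (↑j * t) = 1 := by
      rw [← Real.exp_add]; simp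
    linear_combination (x * y) * h1
  have hprod : ∀ j : ℕ,
      f^[j] (x, y) = (Real.exp (-(↑j * t)) * x, Real.exp (↑j * t) * y) := by
    intro j
    induction j with
    | zero => simp
    | succ j ih =>
      rw [Function.iterate_succ_apply', ih, hf]
      dsimp only
      rw [hkey j, ← htdef, Prod.mk.injEq]
      constructor
      · rw [← mul_assoc, ← Real.exp_add]
        congr 1
        push_cast
        ring
      · rw [← mul_assoc, ← Real.exp_add]
        congr 1
        push_cast
        ring
  set S : Set ℕ := {j : ℕ | y₀ ≤ (f^[j] (x, y)).2 ∧
      (f^[j] (x, y)).2 <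
        Real.exp (deriv q ((f^[j] (x, y)).1 * (f^[j] (x, y)).2)) * y₀} with hSdef
  have hS : ∀ j : ℕ, j ∈ S ↔
      (y₀ ≤ Real.exp (↑j * t) * y ∧ Real.exp (↑j * t) * y < Real.exp t * y₀) := by
    intro j
    rw [hSdef, Set.mem_setOf_eq, hprod j]
    dsimp only
    rw [hkey j, ← htdef]
  -- logs
  set R := Real.log (y₀ / y) with hRdef
  have hR : R = Real.log (y₀ * x) + L := by
    rw [hRdef, hL, Real.log_div (ne_of_gt hy₀) (ne_of_gt hy),
      Real.log_mul (ne_of_gt hy₀) (ne_of_gt hx0), Real.log_mul (ne_of_gt hx0) (ne_of_gt hy)]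
    ring
  have hga : Real.log (y₀ * a₁) ≤ Real.log (y₀ * x) :=
    Real.log_le_log (by positivity) (by nlinarith)
  have hgb : Real.log (y₀ * x) ≤ Real.log (y₀ * b₁) :=
    Real.log_le_log (by positivity) (by nlinarith)
  have hR1 : L / 2 ≤ R := by
    have := neg_abs_le (Real.log (y₀ * a₁))
    linarith
  have hR2 : R ≤ 2 * L := by
    have := le_abs_self (Real.log (y₀ * b₁))
    linarith
  have hR0 : 0 < R := by linarith
  have hexpR : Real.exp R = y₀ / y := Real.exp_log (by positivity)
  -- the candidate return time
  set n := ⌈R / t⌉₊ with hndef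
  have hrn : R / t ≤ (n : ℝ) := Nat.le_ceil _
  have hnr : (n : ℝ) < R / t + 1 := Nat.ceil_lt_add_one (by positivity)
  have hnS : n ∈ S := by
    rw [hS n]
    constructor
    · have h1 : R ≤ ↑n * t := by
        have := mul_le_mul_of_nonneg_right hrn (le_of_lt ht0)
        rw [div_mul_cancel₀ _ (ne_of_gt ht0)] at this
        linarith
      have h2 : Real.exp R ≤ Real.exp (↑n * t) := Real.exp_le_exp.mpr h1
      rw [hexpR] at h2
      calc y₀ = y₀ / y * y := by field_simp
        _ ≤ Real.exp (↑n * t) * y := mul_le_mul_of_nonneg_right h2 (le_of_lt hy)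
    · have h1 : ↑n * t < R + t := by
        have := mul_lt_mul_of_pos_right hnr ht0
        rw [add_mul, div_mul_cancel₀ _ (ne_of_gt ht0)] at this
        linarith
      have h2 : Real.exp (↑n * t) < Real.exp (R + t) := Real.exp_lt_exp.mpr h1
      have h3 : Real.exp (R + t) = Real.exp t * (y₀ / y) := by
        rw [Real.exp_add, hexpR]; ring
      calc Real.exp (↑n * t) * y < Real.exp (R + t) * y := mul_lt_mul_of_pos_right h2 hy
        _ = Real.exp t * y₀ := by rw [h3]; field_simp
  have hne : S.Nonempty := ⟨n, hnS⟩
  refine ⟨hne, ?_, ?_⟩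
  · -- lower bound
    have hmS : sInf S ∈ S := Nat.sInf_mem hne
    rw [hS _] at hmS
    have h1 : R ≤ ↑(sInf S) * t := by
      have h2 : Real.exp R ≤ Real.exp (↑(sInf S) * t) := by
        rw [hexpR]
        rw [div_le_iff₀ hy]
        have := hmS.1
        nlinarith [Real.exp_pos (↑(sInf S) * t)]
      exact Real.exp_le_exp.mp h2
    have h3 : R / t ≤ (↑(sInf S) : ℝ) := by
      rw [div_le_iff₀ ht0]
      linarith
    rw [habs]
    have h4 : 1 / 4 * L / lam ≤ R / t := by
      rw [div_le_div_iff₀ hlam ht0]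
      nlinarith [mul_le_mul_of_nonneg_left ht2 (le_of_lt hL0),
        mul_le_mul_of_nonneg_right hR1 (le_of_lt hlam)]
    linarith
  · -- upper bound
    have hmn : sInf S ≤ n := Nat.sInf_le hnS
    have hmn' : (↑(sInf S) : ℝ) ≤ (n : ℝ) := by exact_mod_cast hmn
    rw [habs]
    have h1 : R / t ≤ 4 * L / lam := by
      rw [div_le_div_iff₀ ht0 hlam]
      nlinarith [mul_le_mul_of_nonneg_right hR2 (le_of_lt hlam),
        mul_le_mul_of_nonneg_left ht1 (by positivity : (0:ℝ) ≤ 4 * L)]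
    have h2 : (1:ℝ) ≤ L / lam := by
      rw [le_div_iff₀ hlam]
      linarith
    have : (↑(sInf S) : ℝ) ≤ 4 * L / lam + L / lam := by linarith
    have h5 : 4 * L / lam + L / lam = 5 * L / lam := by ring
    linarith
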